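/- For every natural number k, the ℝ-subspace of MvPolynomial (Fin 3) ℝ consisting of polynomials that are homogeneous of degree k and harmonic has finrank equal to 2k + 1. -/

import Mathlib

open MvPolynomial

/-- The Laplacian on polynomials in three variables. -/
noncomputable def laplacian : MvPolynomial (Fin 3) ℝ →ₗ[ℝ] MvPolynomial (Fin 3) ℝ :=
  ∑ i : Fin 3,
    ((MvPolynomial.pderiv i).toLinearMap ∘ₗ (MvPolynomial.pderiv i).toLinearMap)

/-!
In degree `k ≤ 1` every homogeneous polynomial is harmonic, and there are `C(k + 2, 2)` of them.
In degree `k = m + 2` the harmonic polynomials are the kernel of `Δ : Hₘ₊₂ → Hₘ`, and this map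
is onto: for a monomial `x^d` of degree `m`,
`Δ (xᵢ² x^d) = (dᵢ + 2)(dᵢ + 1) x^d + (monomials with a larger exponent of xᵢ)`,
so induction on the degree carried by the other variables puts every monomial in the image.
Rank–nullity then gives `C(m + 4, 2) - C(m + 2, 2) = 2 (m + 2) + 1`.
-/

open Module Finsupp

theorem Finsupp.add_le_degree {σ : Type*} [Fintype σ] {d : σ →₀ ℕ} {i j : σ} (hij : i ≠ j) :
    d i + d j ≤ d.degree := by
  classical
  rw [degree_eq_sum, ← Finset.sum_pair hij]
  exact Finset.sum_le_sum_of_subset (Finset.subset_univ _)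

theorem Submodule.finrank_inf_ker_add_finrank_map {K V W : Type*} [DivisionRing K]
    [AddCommGroup V] [Module K V] [AddCommGroup W] [Module K W]
    (f : V →ₗ[K] W) (p : Submodule K V) [FiniteDimensional K p] :
    finrank K ↥(p ⊓ LinearMap.ker f) + finrank K ↥(p.map f) = finrank K p := by
  rw [← (f.domRestrict p).finrank_range_add_finrank_ker, LinearMap.range_domRestrict,
    LinearMap.ker_domRestrict, ← Submodule.finrank_map_subtype_eq, Submodule.map_comap_subtype,
    add_comm]

namespace MvPolynomial

variable {σ R : Type*}

theorem finrank_homogeneousSubmodule [Fintype σ] [CommRing R] [StrongRankCondition R] (n : ℕ) :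
    finrank R (homogeneousSubmodule σ R n) = (Fintype.card σ + n - 1).choose n := by
  classical
  have hset : {d : σ →₀ ℕ | d.degree = n} = ↑((Finset.univ : Finset σ).finsuppAntidiag n) := by
    ext d; simp [degree_eq_sum]
  rw [homogeneousSubmodule_eq_finsupp_supported, hset,
    (AddMonoidAlgebra.supportedEquivFinsupp _).finrank_eq, finrank_finsupp_self]
  simp [Finset.card_finsuppAntidiag_nat_eq_choose]

instance [Finite σ] [CommRing R] (n : ℕ) : Module.Finite R (homogeneousSubmodule σ R n) :=
  Module.Finite.iff_fg.mpr (homogeneousSubmodule_fg σ R n)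

variable (σ R) in
noncomputable def laplace [Fintype σ] [CommSemiring R] :
    MvPolynomial σ R →ₗ[R] MvPolynomial σ R :=
  ∑ i, (pderiv i).toLinearMap ∘ₗ (pderiv i).toLinearMap

section Laplace
variable [Fintype σ] [CommSemiring R]

theorem laplace_apply (p : MvPolynomial σ R) :
    laplace σ R p = ∑ i, pderiv i (pderiv i p) := by
  simp [laplace, LinearMap.sum_apply]

omit [Fintype σ] in
theorem pderiv_pderiv_monomial (i : σ) (s : σ →₀ ℕ) (a : R) :
    pderiv i (pderiv i (monomial s a)) = monomial (s - single i 2) (a * (s i * (s i - 1) : ℕ)) := by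
  rw [pderiv_monomial, pderiv_monomial, tsub_tsub, ← single_add, tsub_apply, single_eq_same,
    mul_assoc, Nat.cast_mul]

theorem laplace_monomial (s : σ →₀ ℕ) (a : R) :
    laplace σ R (monomial s a) =
      ∑ i, monomial (s - single i 2) (a * (s i * (s i - 1) : ℕ)) := by
  simp only [laplace_apply, pderiv_pderiv_monomial]

theorem IsHomogeneous.laplace {p : MvPolynomial σ R} {n : ℕ} (hp : p.IsHomogeneous n) :
    (MvPolynomial.laplace σ R p).IsHomogeneous (n - 2) := by
  rw [laplace_apply]
  exact IsHomogeneous.sum _ _ _ fun i _ ↦ hp.pderiv.pderiv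

theorem IsHomogeneous.laplace_eq_zero {p : MvPolynomial σ R} {n : ℕ} (hp : p.IsHomogeneous n)
    (hn : n ≤ 1) : MvPolynomial.laplace σ R p = 0 := by
  rw [laplace_apply]
  refine Finset.sum_eq_zero fun i _ ↦ ?_
  have hconst : (pderiv i p).totalDegree = 0 := by
    have := hp.pderiv (i := i) |>.totalDegree_le; omega
  rw [totalDegree_eq_zero_iff_eq_C.mp hconst, pderiv_C]

end Laplace

section Surjective
variable [Fintype σ] {K : Type*} [Field K] [CharZero K]

theorem monomial_mem_map_laplace (i₀ : σ) {m : ℕ} {d : σ →₀ ℕ} (hd : d.degree = m) (a : K) :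
    monomial d a ∈ (homogeneousSubmodule σ K (m + 2)).map (laplace σ K) := by
  classical
  induction h : m - d i₀ using Nat.strong_induction_on generalizing d a with
  | _ n ih =>
  set e := d + single i₀ 2 with he
  have he_degree : e.degree = m + 2 := by rw [map_add, degree_single, hd]
  have he_i₀ : e - single i₀ 2 = d := add_tsub_cancel_right d _
  have hc : ((e i₀ * (e i₀ - 1) : ℕ) : K) ≠ 0 := Nat.cast_ne_zero.mpr (by simp [he])
  have hlap := laplace_monomial e (a / (e i₀ * (e i₀ - 1) : ℕ))
  rw [← Finset.add_sum_erase _ _ (Finset.mem_univ i₀), he_i₀, div_mul_cancel₀ _ hc] at hlap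
  rw [eq_sub_of_add_eq hlap.symm]
  refine Submodule.sub_mem _ (Submodule.mem_map_of_mem (isHomogeneous_monomial _ he_degree))
    (Submodule.sum_mem _ fun i hi ↦ ?_)
  have hi₀ : i ≠ i₀ := Finset.ne_of_mem_erase hi
  have he_i : e i = d i := by simp [he, hi₀.symm]
  by_cases h2 : 2 ≤ d i
  · have hle : single i 2 ≤ e := single_le_iff.mpr (he_i ▸ h2)
    have hi₀_exp : (e - single i 2 : σ →₀ ℕ) i₀ = d i₀ + 2 := by simp [he, hi₀]
    refine ih _ ?_ ?_ _ rfl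
    · have := add_le_degree (d := d) hi₀.symm; omega
    · have := congrArg degree (tsub_add_cancel_of_le hle)
      rw [map_add, degree_single, he_degree] at this; omega
  · have : e i * (e i - 1) = 0 := by interval_cases h : d i <;> simp [he_i]
    simp [this]

theorem map_laplace_homogeneousSubmodule [Nonempty σ] (m : ℕ) :
    (homogeneousSubmodule σ K (m + 2)).map (laplace σ K) = homogeneousSubmodule σ K m := by
  refine le_antisymm (Submodule.map_le_iff_le_comap.mpr fun p hp ↦ hp.laplace) fun p hp ↦ ?_
  rw [p.as_sum]
  refine Submodule.sum_mem _ fun d hd ↦ monomial_mem_map_laplace (Classical.arbitrary σ) ?_ _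
  by_contra hdm
  exact mem_support_iff.mp hd (hp.coeff_eq_zero hdm)

theorem finrank_harmonic_add_finrank [Nonempty σ] (m : ℕ) :
    finrank K ↥(homogeneousSubmodule σ K (m + 2) ⊓ LinearMap.ker (laplace σ K)) +
      finrank K (homogeneousSubmodule σ K m) = finrank K (homogeneousSubmodule σ K (m + 2)) := by
  rw [← map_laplace_homogeneousSubmodule m]
  exact Submodule.finrank_inf_ker_add_finrank_map _ _

end Surjective

end MvPolynomial

theorem laplacian_eq_laplace : laplacian = laplace (Fin 3) ℝ := rfl

theorem finrank_harmonic_homogeneous (k : ℕ) :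
    Module.finrank ℝ
      ↥(MvPolynomial.homogeneousSubmodule (Fin 3) ℝ k ⊓ LinearMap.ker laplacian)
      = 2 * k + 1 := by
  rw [laplacian_eq_laplace]
  obtain hk | ⟨m, rfl⟩ : k ≤ 1 ∨ ∃ m, k = m + 2 := by
    rcases k with _ | _ | m <;> simp
  · have harmonic : homogeneousSubmodule (Fin 3) ℝ k ≤ LinearMap.ker (laplace (Fin 3) ℝ) :=
      fun p hp ↦ hp.laplace_eq_zero hk
    rw [inf_eq_left.mpr harmonic, finrank_homogeneousSubmodule]
    interval_cases k <;> rfl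
  · have := finrank_harmonic_add_finrank (σ := Fin 3) (K := ℝ) m
    rw [finrank_homogeneousSubmodule, finrank_homogeneousSubmodule, Fintype.card_fin,
      show 3 + m - 1 = m + 2 by omega, Nat.choose_symm_add,
      show 3 + (m + 2) - 1 = m + 2 + 2 by omega, Nat.choose_symm_add] at this
    have pascal : (m + 2 + 2).choose 2 = (m + 2).choose 2 + (2 * (m + 2) + 1) := by
      simp [Nat.choose_succ_succ]; omega
    omega
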